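/- arXiv:1507.06015 — 5 statements merged into one kernel-verified Lean document; each statement's English description precedes it below -/
import Mathlib

section
/- Let X₁, X₂, ... be i.i.d. real random variables with finite second moment whose common distribution has a positive continuous density near the α-quantile v_α. Define the empirical CVaR estimator ĉ_α^N = v̂_α^N + (1/((1-α)N)) Σ_{i=1}^N (X_i − v̂_α^N)⁺, where v̂_α^N is the sample α-quantile. Then ĉ_α^N converges almost surely to c_α = v_α + (1/(1-α)) E[(X − v_α)⁺] as N → ∞. -/
open MeasureTheory ProbabilityTheory Filter Set

/-- Empirical c.d.f. of the first `N` observations. -/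
noncomputable def empCDF {Ω : Type*} (X : ℕ → Ω → ℝ) (N : ℕ) (ω : Ω) (t : ℝ) : ℝ :=
  (N : ℝ)⁻¹ * ∑ i ∈ Finset.range N, if X i ω ≤ t then (1 : ℝ) else 0

/-- Sample `α`-quantile (the `⌈αN⌉`-th order statistic) of the first `N` observations. -/
noncomputable def sampleQuantile {Ω : Type*} (X : ℕ → Ω → ℝ) (N : ℕ) (α : ℝ) (ω : Ω) : ℝ :=
  sInf {t : ℝ | α ≤ empCDF X N ω t}

/-!
The sample quantile is trapped by the empirical c.d.f. at two points: if `F_N a < α ≤ F_N b`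
then `a ≤ v̂_N ≤ b`. By the strong law, `F_N → F` at every rational point almost surely, and
`F < α` to the left of `v_α` while `F > α` to the right of it (the density is positive there),
so `v̂_N → v_α`. Since `t ↦ (x - t)⁺` is `1`-Lipschitz, replacing `v̂_N` by `v_α` changes the
empirical mean of `(X_i - v̂_N)⁺` by at most `|v̂_N - v_α|`, and the strong law applied to
`(X - v_α)⁺` gives the limit.
-/

open scoped Topology

section GeneralizedInverse

variable {F : ℝ → ℝ} {α : ℝ}

lemma lt_of_lt_sInf_setOf_le (hbdd : BddBelow {s | α ≤ F s}) {t : ℝ}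
    (ht : t < sInf {s | α ≤ F s}) : F t < α :=
  not_le.1 fun h => (csInf_le hbdd h).not_gt ht

lemma le_of_sInf_setOf_le_lt (hF : Monotone F) (hne : {s | α ≤ F s}.Nonempty) {t : ℝ}
    (ht : sInf {s | α ≤ F s} < t) : α ≤ F t := by
  obtain ⟨s, hs, hst⟩ := exists_lt_of_csInf_lt hne ht
  exact hs.trans (hF hst.le)

lemma sInf_setOf_le_mem_Icc (hF : Monotone F) {a b : ℝ} (ha : F a < α) (hb : α ≤ F b) :
    sInf {s | α ≤ F s} ∈ Icc a b := by
  have hlower : a ∈ lowerBounds {s | α ≤ F s} := fun s hs => (hF.reflect_lt (ha.trans_le hs)).le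
  exact ⟨le_csInf ⟨b, hb⟩ hlower, csInf_le ⟨a, hlower⟩ hb⟩

lemma tendsto_sInf_setOf_le {G : ℕ → ℝ → ℝ} (hG : ∀ N, Monotone (G N)) {v : ℝ}
    (h : ∀ ε > 0, ∃ a b, v - ε < a ∧ b < v + ε ∧ ∀ᶠ N in atTop, G N a < α ∧ α ≤ G N b) :
    Tendsto (fun N => sInf {s | α ≤ G N s}) atTop (𝓝 v) := by
  refine Metric.tendsto_nhds.2 fun ε hε => ?_
  obtain ⟨a, b, ha, hb, hev⟩ := h ε hε
  filter_upwards [hev] with N ⟨hGa, hGb⟩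
  have hmem := sInf_setOf_le_mem_Icc (hG N) hGa hGb
  rw [Real.dist_eq, abs_lt]
  constructor <;> linarith [hmem.1, hmem.2]

end GeneralizedInverse

section CDF

variable {ν : Measure ℝ} {α : ℝ}

lemma bddBelow_setOf_le_cdf (hα : 0 < α) : BddBelow {s | α ≤ cdf ν s} := by
  obtain ⟨b, hb⟩ := eventually_atBot.1 ((tendsto_cdf_atBot ν).eventually (gt_mem_nhds hα))
  exact ⟨b, fun s hs => le_of_not_ge fun hsb => (hb s hsb).not_ge hs⟩

lemma nonempty_setOf_le_cdf (hα : α < 1) : {s | α ≤ cdf ν s}.Nonempty :=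
  ((tendsto_cdf_atTop ν).eventually (lt_mem_nhds hα)).exists.imp fun _ h => h.le

lemma le_cdf_sInf_setOf_le_cdf (hα : α < 1) : α ≤ cdf ν (sInf {s | α ≤ cdf ν s}) :=
  ge_of_tendsto (((cdf ν).right_continuous _).mono Ioi_subset_Ici_self)
    (eventually_nhdsWithin_of_forall fun _ ht =>
      le_of_sInf_setOf_le_lt (monotone_cdf ν) (nonempty_setOf_le_cdf hα) ht)

lemma cdf_lt_cdf_of_measure_Ioc_pos [IsProbabilityMeasure ν] {a b : ℝ} (h : 0 < ν (Ioc a b)) :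
    cdf ν a < cdf ν b := by
  rwa [← measure_cdf ν, StieltjesFunction.measure_Ioc, ENNReal.ofReal_pos, sub_pos] at h

end CDF

lemma withDensity_ofReal_apply_pos {β : Type*} [MeasurableSpace β] {μ : Measure β} {f : β → ℝ}
    {s : Set β} (hs : MeasurableSet s) (hμs : μ s ≠ 0) (hf : AEMeasurable f (μ.restrict s))
    (hpos : ∀ x ∈ s, 0 < f x) : 0 < μ.withDensity (fun x => ENNReal.ofReal (f x)) s := by
  rw [withDensity_apply _ hs, pos_iff_ne_zero, Ne, setLIntegral_eq_zero_iff' hs hf.ennreal_ofReal]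
  refine fun hzero => hμs (measure_eq_zero_iff_ae_notMem.2 ?_)
  filter_upwards [hzero] with x hx hxs
  exact (ENNReal.ofReal_pos.2 (hpos x hxs)).ne' (hx hxs)

lemma withDensity_Ioc_pos_of_continuousOn_ball {f : ℝ → ℝ} {v ε b : ℝ} (hε : 0 < ε)
    (hcont : ContinuousOn f (Metric.ball v ε)) (hpos : ∀ t ∈ Metric.ball v ε, 0 < f t)
    (hb : v < b) : 0 < volume.withDensity (fun t => ENNReal.ofReal (f t)) (Ioc v b) := by
  set c := min b (v + ε / 2)
  have hvc : v < c := lt_min hb (by linarith)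
  have hball : Ioc v c ⊆ Metric.ball v ε := fun t ht => by
    rw [Metric.mem_ball, Real.dist_eq, abs_lt]
    constructor <;> linarith [ht.1, ht.2, min_le_right b (v + ε / 2)]
  refine (withDensity_ofReal_apply_pos measurableSet_Ioc (by simp [hvc])
    ((hcont.mono hball).aemeasurable measurableSet_Ioc) fun t ht => hpos t (hball ht)).trans_le
    (measure_mono (Ioc_subset_Ioc_right (min_le_left _ _)))

lemma abs_sum_max_sub_sub_sum_max_sub_le {ι : Type*} (s : Finset ι) (x : ι → ℝ) (a b : ℝ) :
    |∑ i ∈ s, max (x i - a) 0 - ∑ i ∈ s, max (x i - b) 0| ≤ s.card * |a - b| := by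
  rw [← Finset.sum_sub_distrib, ← nsmul_eq_mul]
  refine (Finset.abs_sum_le_sum_abs _ _).trans (Finset.sum_le_card_nsmul _ _ _ fun i _ => ?_)
  refine (abs_max_sub_max_le_abs _ _ _).trans_eq ?_
  rw [sub_sub_sub_cancel_left, abs_sub_comm]

lemma tendsto_average_max_sub_of_tendsto {x q : ℕ → ℝ} {v m : ℝ} (hq : Tendsto q atTop (𝓝 v))
    (hm : Tendsto (fun N : ℕ => (N : ℝ)⁻¹ * ∑ i ∈ Finset.range N, max (x i - v) 0) atTop (𝓝 m)) :
    Tendsto (fun N : ℕ => (N : ℝ)⁻¹ * ∑ i ∈ Finset.range N, max (x i - q N) 0) atTop (𝓝 m) := by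
  refine hm.congr_dist (squeeze_zero (fun _ => dist_nonneg) (fun N => ?_)
    (by simpa using (hq.sub_const v).abs))
  calc dist _ _
      = (N : ℝ)⁻¹ * |∑ i ∈ Finset.range N, max (x i - v) 0
          - ∑ i ∈ Finset.range N, max (x i - q N) 0| := by
        rw [Real.dist_eq, ← mul_sub, abs_mul, abs_of_nonneg (by positivity)]
    _ ≤ (N : ℝ)⁻¹ * (N * |v - q N|) := by
        gcongr
        simpa using abs_sum_max_sub_sub_sum_max_sub_le (Finset.range N) x v (q N)
    _ ≤ |q N - v| := by
        rw [← mul_assoc, abs_sub_comm]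
        exact mul_le_of_le_one_left (abs_nonneg _) inv_mul_le_one

lemma empCDF_mono {Ω : Type*} (X : ℕ → Ω → ℝ) (N : ℕ) (ω : Ω) : Monotone (empCDF X N ω) := by
  intro s t hst
  unfold empCDF
  gcongr with i
  split_ifs with hs ht
  exacts [le_rfl, absurd (hs.trans hst) ht, zero_le_one, le_rfl]

section StrongLaw

variable {Ω : Type*} {mΩ : MeasurableSpace Ω} (μ : Measure Ω) {X : ℕ → Ω → ℝ}

lemma ae_tendsto_average_comp (hmeas : ∀ i, Measurable (X i)) (hindep : iIndepFun X μ)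
    (hident : ∀ i, μ.map (X i) = μ.map (X 0)) {g : ℝ → ℝ} (hg : Measurable g)
    (hint : Integrable (fun ω => g (X 0 ω)) μ) :
    ∀ᵐ ω ∂μ, Tendsto (fun N : ℕ => (N : ℝ)⁻¹ * ∑ i ∈ Finset.range N, g (X i ω)) atTop
      (𝓝 (∫ ω, g (X 0 ω) ∂μ)) := by
  have hid : ∀ i, IdentDistrib (fun ω => g (X i ω)) (fun ω => g (X 0 ω)) μ μ := fun i =>
    IdentDistrib.comp ⟨(hmeas i).aemeasurable, (hmeas 0).aemeasurable, hident i⟩ hg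
  filter_upwards [strong_law_ae_real _ hint (fun i j hij => (hindep.indepFun hij).comp hg hg) hid]
    with ω hω
  simpa only [div_eq_inv_mul, Function.comp_apply] using hω

lemma ae_tendsto_empCDF [IsProbabilityMeasure μ] (hmeas : ∀ i, Measurable (X i))
    (hindep : iIndepFun X μ) (hident : ∀ i, μ.map (X i) = μ.map (X 0)) (t : ℝ) :
    ∀ᵐ ω ∂μ, Tendsto (fun N => empCDF X N ω t) atTop (𝓝 (cdf (μ.map (X 0)) t)) := by
  have : IsProbabilityMeasure (μ.map (X 0)) :=
    Measure.isProbabilityMeasure_map (hmeas 0).aemeasurable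
  have hg : Measurable fun x : ℝ => if x ≤ t then (1 : ℝ) else 0 :=
    Measurable.ite measurableSet_Iic measurable_const measurable_const
  have hind : (fun ω => if X 0 ω ≤ t then (1 : ℝ) else 0) = (X 0 ⁻¹' Iic t).indicator 1 := by
    funext ω
    by_cases h : X 0 ω ≤ t <;> simp [h]
  have hint : Integrable (fun ω => if X 0 ω ≤ t then (1 : ℝ) else 0) μ := by
    rw [hind]
    exact (integrable_const 1).indicator (hmeas 0 measurableSet_Iic)
  have hmean : ∫ ω, (if X 0 ω ≤ t then (1 : ℝ) else 0) ∂μ = cdf (μ.map (X 0)) t := by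
    rw [hind, integral_indicator_one (hmeas 0 measurableSet_Iic), cdf_eq_real,
      map_measureReal_apply (hmeas 0) measurableSet_Iic]
  simpa only [empCDF, hmean] using ae_tendsto_average_comp μ hmeas hindep hident hg hint

lemma ae_tendsto_sampleQuantile [IsProbabilityMeasure μ] (hmeas : ∀ i, Measurable (X i))
    (hindep : iIndepFun X μ) (hident : ∀ i, μ.map (X i) = μ.map (X 0)) {α v : ℝ}
    (hα : α ∈ Ioo (0 : ℝ) 1) (hv : v = sInf {t | α ≤ cdf (μ.map (X 0)) t})
    (hmass : ∀ b > v, 0 < μ.map (X 0) (Ioc v b)) :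
    ∀ᵐ ω ∂μ, Tendsto (fun N => sampleQuantile X N α ω) atTop (𝓝 v) := by
  have : IsProbabilityMeasure (μ.map (X 0)) :=
    Measure.isProbabilityMeasure_map (hmeas 0).aemeasurable
  filter_upwards [ae_all_iff.2 fun q : ℚ => ae_tendsto_empCDF μ hmeas hindep hident q] with ω hω
  refine tendsto_sInf_setOf_le (empCDF_mono X · ω) fun ε hε => ?_
  obtain ⟨a, hva, hav⟩ := exists_rat_btwn (sub_lt_self v hε)
  obtain ⟨b, hvb, hbv⟩ := exists_rat_btwn (lt_add_of_pos_right v hε)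
  have hFa : cdf (μ.map (X 0)) a < α :=
    lt_of_lt_sInf_setOf_le (bddBelow_setOf_le_cdf hα.1) (hv ▸ hav)
  have hFb : α < cdf (μ.map (X 0)) b :=
    (hv ▸ le_cdf_sInf_setOf_le_cdf hα.2).trans_lt (cdf_lt_cdf_of_measure_Ioc_pos (hmass b hvb))
  exact ⟨a, b, hva, hbv, ((hω a).eventually (gt_mem_nhds hFa)).and
    (((hω b).eventually (lt_mem_nhds hFb)).mono fun _ => le_of_lt)⟩

end StrongLaw

/-- Strong consistency of the empirical CVaR estimator. -/
theorem empiricalCVaR_tendsto_CVaR {Ω : Type*} {mΩ : MeasurableSpace Ω}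
    (μ : Measure Ω) [IsProbabilityMeasure μ]
    (X : ℕ → Ω → ℝ) (hmeas : ∀ i, Measurable (X i))
    (hindep : iIndepFun X μ)
    (hident : ∀ i, μ.map (X i) = μ.map (X 0))
    (hsq : Integrable (fun ω => (X 0 ω) ^ 2) μ)
    (f : ℝ → ℝ)
    (hdens : μ.map (X 0) = volume.withDensity (fun t => ENNReal.ofReal (f t)))
    (α : ℝ) (hα : α ∈ Set.Ioo (0 : ℝ) 1)
    (vα : ℝ) (hvα : vα = sInf {t : ℝ | α ≤ ((μ.map (X 0)) (Set.Iic t)).toReal})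
    (hf : ∃ ε > 0, ContinuousOn f (Metric.ball vα ε) ∧ ∀ t ∈ Metric.ball vα ε, 0 < f t) :
    ∀ᵐ ω ∂μ, Tendsto
      (fun N : ℕ => sampleQuantile X N α ω +
        ((1 - α) * N)⁻¹ * ∑ i ∈ Finset.range N, max (X i ω - sampleQuantile X N α ω) 0)
      atTop (nhds (vα + (1 - α)⁻¹ * ∫ ω, max (X 0 ω - vα) 0 ∂μ)) := by
  have : IsProbabilityMeasure (μ.map (X 0)) :=
    Measure.isProbabilityMeasure_map (hmeas 0).aemeasurable
  have hv : vα = sInf {t | α ≤ cdf (μ.map (X 0)) t} := by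
    simpa only [cdf_eq_real, measureReal_def] using hvα
  have hmass : ∀ b > vα, 0 < μ.map (X 0) (Ioc vα b) := fun b hb => by
    obtain ⟨ε, hε, hcont, hpos⟩ := hf
    rw [hdens]
    exact withDensity_Ioc_pos_of_continuousOn_ball hε hcont hpos hb
  have hX : Integrable (X 0) μ :=
    ((memLp_two_iff_integrable_sq (hmeas 0).aestronglyMeasurable).2 hsq).integrable one_le_two
  have hmean := ae_tendsto_average_comp μ hmeas hindep hident (g := fun x => max (x - vα) 0)
    (by fun_prop) (hX.sub (integrable_const vα)).pos_part
  filter_upwards [ae_tendsto_sampleQuantile μ hmeas hindep hident hα hv hmass, hmean] with ω hq hm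
  refine (hq.add ((tendsto_average_max_sub_of_tendsto hq hm).const_mul (1 - α)⁻¹)).congr
    fun N => ?_
  rw [mul_inv, mul_assoc]
end

section
/- Let X₁, X₂, ... be i.i.d. with finite second moment, α ∈ (0,1), and v_α the α-quantile of their common distribution (with positive continuous density near v_α). Define the CVaR estimator ĉ_α^N via sample quantile plug-in. Then ĉ_α^N − c_α = ((1/N) Σ_{i=1}^N [v_α + (1/(1−α))(X_i − v_α)⁺] − c_α) + B_N, where B_N = O(N^{−1} log N) almost surely. -/
open MeasureTheory ProbabilityTheory Filter Set

open scoped NNReal Topology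

/-!
The empirical CVaR is the minimum of the convex piecewise linear Rockafellar–Uryasev function
`φ_N t = t + ((1 - α) N)⁻¹ ∑ (X_i - t)⁺`, attained at the sample quantile `q_N`, and the averaged
term of the representation is `φ_N v_α`. The right derivative of `φ_N` at `t` is
`(F_N t - α) / (1 - α)`, so `0 ≤ φ_N v_α - φ_N q_N ≤ |q_N - v_α| |F_N v_α - α| / (1 - α)`.
By Hoeffding's inequality and Borel–Cantelli, almost surely `|F_N t_N - F t_N| < √(log N / N)`
eventually, for `t_N = v_α` and `t_N = v_α ± √(log N / N) / c`, where `c` bounds the density from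
below near `v_α`. As `F v_α = α`, both `|F_N v_α - α|` and `|q_N - v_α|` are `O(√(log N / N))`.
-/

section Quantile

variable {G : ℝ → ℝ} {α t : ℝ}

lemma lt_of_lt_sInf_setOf_le_s6 (hG : Monotone G) (hbot : ∃ t₀, G t₀ < α)
    (ht : t < sInf {s | α ≤ G s}) : G t < α := by
  obtain ⟨t₀, ht₀⟩ := hbot
  have hbdd : BddBelow {s | α ≤ G s} :=
    ⟨t₀, fun s hs => le_of_lt (hG.reflect_lt (ht₀.trans_le hs))⟩
  have h := notMem_of_lt_csInf ht hbdd
  exact not_le.mp h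

lemma le_of_sInf_setOf_le_lt_s6 (hG : Monotone G) (htop : ∃ t₁, α ≤ G t₁)
    (ht : sInf {s | α ≤ G s} < t) : α ≤ G t := by
  obtain ⟨s, hs, hst⟩ := exists_lt_of_csInf_lt htop ht
  exact (show α ≤ G s from hs).trans (hG hst.le)

lemma apply_sInf_setOf_le_eq (hG : Monotone G) (hbot : ∃ t₀, G t₀ < α)
    (htop : ∃ t₁, α ≤ G t₁) (hc : ContinuousAt G (sInf {s | α ≤ G s})) :
    G (sInf {s | α ≤ G s}) = α := by
  set q := sInf {s | α ≤ G s}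
  apply le_antisymm
  · refine le_of_tendsto (hc.tendsto.mono_left (nhdsWithin_le_nhds (s := Iio q))) ?_
    filter_upwards [self_mem_nhdsWithin] with t ht using (lt_of_lt_sInf_setOf_le_s6 hG hbot ht).le
  · refine ge_of_tendsto (hc.tendsto.mono_left (nhdsWithin_le_nhds (s := Ioi q))) ?_
    filter_upwards [self_mem_nhdsWithin] with t ht using le_of_sInf_setOf_le_lt_s6 hG htop ht

end Quantile

section CDF

variable {ν : Measure ℝ} [IsProbabilityMeasure ν] {f : ℝ → ℝ}

lemma continuous_cdf [NullSingletonClass ν] : Continuous (cdf ν) := by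
  refine continuous_iff_continuousAt.2 fun x => ?_
  have hright : Function.rightLim (cdf ν) x = cdf ν x :=
    ((cdf ν).right_continuous x).rightLim_eq
  have hleft : Function.leftLim (cdf ν) x = cdf ν x := by
    have h := (cdf ν).measure_singleton x
    rw [measure_cdf, measure_singleton, eq_comm, ENNReal.ofReal_eq_zero, sub_nonpos] at h
    exact le_antisymm ((cdf ν).mono.leftLim_le le_rfl) h
  rw [(cdf ν).mono.continuousAt_iff_leftLim_eq_rightLim, hleft, hright]

lemma cdf_sInf_setOf_le_cdf_eq [NullSingletonClass ν] {α : ℝ} (hα : α ∈ Ioo 0 1) :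
    cdf ν (sInf {t | α ≤ cdf ν t}) = α :=
  apply_sInf_setOf_le_eq (monotone_cdf ν)
    ((tendsto_cdf_atBot ν).eventually (eventually_lt_nhds hα.1)).exists
    ((tendsto_cdf_atTop ν).eventually (eventually_ge_nhds hα.2)).exists
    continuous_cdf.continuousAt

lemma mul_sub_le_cdf_sub_cdf
    (hdens : ν = volume.withDensity (fun t => ENNReal.ofReal (f t))) {a b c : ℝ} (hab : a ≤ b)
    (hf : ∀ t ∈ Ioc a b, c ≤ f t) :
    c * (b - a) ≤ cdf ν b - cdf ν a := by
  rcases le_or_gt c 0 with hc | hc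
  · nlinarith [(cdf ν).mono hab]
  have h : ENNReal.ofReal (c * (b - a)) ≤ ENNReal.ofReal (cdf ν b - cdf ν a) := by
    calc ENNReal.ofReal (c * (b - a)) = ∫⁻ _ in Ioc a b, ENNReal.ofReal c := by
          rw [setLIntegral_const, Real.volume_Ioc, ENNReal.ofReal_mul hc.le]
      _ ≤ ∫⁻ t in Ioc a b, ENNReal.ofReal (f t) :=
          setLIntegral_mono' measurableSet_Ioc fun t ht => ENNReal.ofReal_le_ofReal (hf t ht)
      _ = ENNReal.ofReal (cdf ν b - cdf ν a) := by
          rw [← withDensity_apply _ measurableSet_Ioc, ← hdens, ← (cdf ν).measure_Ioc, measure_cdf]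
  exact (ENNReal.ofReal_le_ofReal_iff (sub_nonneg.2 ((cdf ν).mono hab))).1 h

lemma exists_mul_le_cdf_sub_cdf
    (hdens : ν = volume.withDensity (fun t => ENNReal.ofReal (f t))) {v : ℝ}
    (hf : ∃ ε > 0, ContinuousOn f (Metric.ball v ε) ∧ ∀ t ∈ Metric.ball v ε, 0 < f t) :
    ∃ c > 0, ∃ ε > 0, ∀ e, 0 ≤ e → e < ε →
      c * e ≤ cdf ν (v + e) - cdf ν v ∧ c * e ≤ cdf ν v - cdf ν (v - e) := by
  obtain ⟨ε, hε, hcont, hpos⟩ := hf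
  have hv : v ∈ Metric.ball v ε := Metric.mem_ball_self hε
  have hlt : ∀ᶠ t in 𝓝 v, f v / 2 < f t :=
    (hcont.continuousAt (Metric.isOpen_ball.mem_nhds hv)).eventually
      (lt_mem_nhds (half_lt_self (hpos v hv)))
  obtain ⟨ε', hε', hball⟩ := Metric.eventually_nhds_iff.1 hlt
  refine ⟨f v / 2, half_pos (hpos v hv), ε', hε', fun e he0 heε => ⟨?_, ?_⟩⟩
  · have := mul_sub_le_cdf_sub_cdf hdens (le_add_of_nonneg_right he0) (c := f v / 2)
      fun t ht => (hball <| by rw [Real.dist_eq, abs_lt]; constructor <;> linarith [ht.1, ht.2]).le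
    rwa [add_sub_cancel_left] at this
  · have := mul_sub_le_cdf_sub_cdf hdens (sub_le_self v he0) (c := f v / 2)
      fun t ht => (hball <| by rw [Real.dist_eq, abs_lt]; constructor <;> linarith [ht.1, ht.2]).le
    rwa [sub_sub_cancel] at this

end CDF

section Empirical

variable {Ω : Type*} (X : ℕ → Ω → ℝ) (N : ℕ) (ω : Ω) {α : ℝ}

lemma natCast_mul_empCDF (t : ℝ) :
    (N : ℝ) * empCDF X N ω t = ∑ i ∈ Finset.range N, if X i ω ≤ t then (1 : ℝ) else 0 := by
  rcases N.eq_zero_or_pos with rfl | hN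
  · simp
  · rw [empCDF, mul_inv_cancel_left₀ (by positivity)]

lemma monotone_empCDF : Monotone (empCDF X N ω) := fun s t hst => by
  unfold empCDF
  gcongr with i
  split_ifs with hs ht
  exacts [le_rfl, absurd (hs.trans hst) ht, zero_le_one, le_rfl]

lemma empCDF_eventually_eq_zero : ∀ᶠ t in atBot, empCDF X N ω t = 0 := by
  filter_upwards [(Filter.eventually_all_finset (Finset.range N)).2
    fun i _ => eventually_lt_atBot (X i ω)] with t ht
  simp [empCDF, Finset.sum_eq_zero fun i hi => if_neg (ht i hi).not_ge]

lemma empCDF_eventually_eq_one (hN : 0 < N) : ∀ᶠ t in atTop, empCDF X N ω t = 1 := by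
  filter_upwards [(Filter.eventually_all_finset (Finset.range N)).2
    fun i _ => eventually_ge_atTop (X i ω)] with t ht
  rw [empCDF, Finset.sum_congr rfl fun i hi => if_pos (ht i hi)]
  simp [hN.ne']

lemma empCDF_lt_of_lt_sampleQuantile (hα : 0 < α) {t : ℝ}
    (ht : t < sampleQuantile X N α ω) : empCDF X N ω t < α :=
  lt_of_lt_sInf_setOf_le_s6 (monotone_empCDF X N ω)
    (((empCDF_eventually_eq_zero X N ω).mono fun _ h => h ▸ hα).exists) ht

lemma le_empCDF_of_sampleQuantile_lt (hN : 0 < N) (hα : α ≤ 1) {t : ℝ}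
    (ht : sampleQuantile X N α ω < t) : α ≤ empCDF X N ω t :=
  le_of_sInf_setOf_le_lt_s6 (monotone_empCDF X N ω)
    (((empCDF_eventually_eq_one X N ω hN).mono fun _ h => h ▸ hα).exists) ht

end Empirical

/-- The Rockafellar–Uryasev function of the empirical distribution: its minimum, attained at the
sample quantile, is the empirical CVaR. -/
noncomputable def empCVaRObjective {Ω : Type*} (X : ℕ → Ω → ℝ) (N : ℕ) (α : ℝ) (ω : Ω) (t : ℝ) :
    ℝ :=
  t + ((1 - α) * N)⁻¹ * ∑ i ∈ Finset.range N, max (X i ω - t) 0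

section Objective

variable {Ω : Type*} (X : ℕ → Ω → ℝ) {N : ℕ} (ω : Ω) {α : ℝ}

lemma continuous_empCVaRObjective : Continuous (empCVaRObjective X N α ω) := by
  unfold empCVaRObjective
  fun_prop

lemma sub_mul_empCDF_sub_div_le (hN : 0 < N) (hα : α < 1) (s t : ℝ) :
    (s - t) * (empCDF X N ω t - α) / (1 - α) ≤
      empCVaRObjective X N α ω s - empCVaRObjective X N α ω t := by
  have hpoint : ∀ x : ℝ,
      max (x - t) 0 - (s - t) * (1 - if x ≤ t then 1 else 0) ≤ max (x - s) 0 := by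
    intro x
    split_ifs with hx
    · simp only [sub_self, mul_zero, max_eq_right (sub_nonpos.2 hx)]
      exact le_max_right _ _
    · rw [sub_zero, mul_one, max_eq_left (by linarith)]
      exact (le_max_left _ _).trans_eq' (by ring)
  have hsum : ∑ i ∈ Finset.range N, max (X i ω - t) 0
      - (s - t) * (N - N * empCDF X N ω t) ≤ ∑ i ∈ Finset.range N, max (X i ω - s) 0 := by
    calc _ = ∑ i ∈ Finset.range N,
          (max (X i ω - t) 0 - (s - t) * (1 - if X i ω ≤ t then 1 else 0)) := by
          rw [natCast_mul_empCDF, Finset.sum_sub_distrib, ← Finset.mul_sum, Finset.sum_sub_distrib,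
            Finset.sum_const, Finset.card_range, nsmul_one]
      _ ≤ _ := Finset.sum_le_sum fun i _ => hpoint _
  have h1α : 0 < 1 - α := sub_pos.2 hα
  have hN' : (0 : ℝ) < N := Nat.cast_pos.2 hN
  unfold empCVaRObjective
  rw [div_le_iff₀ h1α]
  field_simp
  linarith

lemma empCVaRObjective_sampleQuantile_le (hN : 0 < N) (hα : α ∈ Ioo 0 1) (t : ℝ) :
    empCVaRObjective X N α ω (sampleQuantile X N α ω) ≤ empCVaRObjective X N α ω t := by
  set q := sampleQuantile X N α ω
  have h1α : 0 < 1 - α := sub_pos.2 hα.2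
  have hφ := (continuous_empCVaRObjective X ω (N := N) (α := α)).tendsto q
  rcases lt_trichotomy t q with htq | rfl | hqt
  · refine le_of_tendsto (hφ.mono_left (nhdsWithin_le_nhds (s := Iio q))) ?_
    filter_upwards [Ioo_mem_nhdsLT htq] with u hu
    have hFu := empCDF_lt_of_lt_sampleQuantile X N ω hα.1 hu.2
    have := sub_mul_empCDF_sub_div_le X ω hN hα.2 t u
    have : 0 ≤ (t - u) * (empCDF X N ω u - α) / (1 - α) :=
      div_nonneg (mul_nonneg_of_nonpos_of_nonpos (by linarith [hu.1]) (by linarith)) h1α.le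
    linarith
  · exact le_rfl
  · refine le_of_tendsto (hφ.mono_left (nhdsWithin_le_nhds (s := Ioi q))) ?_
    filter_upwards [Ioo_mem_nhdsGT hqt] with u hu
    have hFu := le_empCDF_of_sampleQuantile_lt X N ω hN hα.2.le hu.1
    have := sub_mul_empCDF_sub_div_le X ω hN hα.2 t u
    have : 0 ≤ (t - u) * (empCDF X N ω u - α) / (1 - α) :=
      div_nonneg (mul_nonneg (by linarith [hu.2]) (by linarith)) h1α.le
    linarith

lemma abs_empCVaRObjective_sampleQuantile_sub_le (hN : 0 < N) (hα : α ∈ Ioo 0 1) (v : ℝ) :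
    |empCVaRObjective X N α ω (sampleQuantile X N α ω) - empCVaRObjective X N α ω v| ≤
      |sampleQuantile X N α ω - v| * |empCDF X N ω v - α| / (1 - α) := by
  have hle := empCVaRObjective_sampleQuantile_le X ω hN hα v
  have hge := sub_mul_empCDF_sub_div_le X ω hN hα.2 (sampleQuantile X N α ω) v
  have h1α : 0 < 1 - α := sub_pos.2 hα.2
  rw [abs_le]
  constructor
  · refine le_trans ?_ hge
    rw [← neg_div, ← abs_mul]
    gcongr
    exact neg_abs_le _
  · exact (sub_nonpos.2 hle).trans (by positivity)

lemma abs_empCVaRObjective_sampleQuantile_sub_le_of_empCDF (hN : 0 < N) (hα : α ∈ Ioo 0 1)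
    {v e δ : ℝ} (hv : |empCDF X N ω v - α| ≤ δ) (hright : α < empCDF X N ω (v + e))
    (hleft : empCDF X N ω (v - e) < α) :
    |empCVaRObjective X N α ω (sampleQuantile X N α ω) - empCVaRObjective X N α ω v| ≤
      e * δ / (1 - α) := by
  have hq : |sampleQuantile X N α ω - v| ≤ e := by
    rw [abs_le]
    constructor
    · by_contra! h
      exact hleft.not_ge (le_empCDF_of_sampleQuantile_lt X N ω hN hα.2.le (by linarith))
    · by_contra! h
      exact hright.not_gt (empCDF_lt_of_lt_sampleQuantile X N ω hα.1 (by linarith))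
  refine (abs_empCVaRObjective_sampleQuantile_sub_le X ω hN hα v).trans ?_
  gcongr
  · exact sub_pos.2 hα.2 |>.le
  · exact (abs_nonneg _).trans hq

lemma inv_mul_sum_eq_empCVaRObjective (hN : 0 < N) (v : ℝ) :
    (N : ℝ)⁻¹ * ∑ i ∈ Finset.range N, (v + (1 - α)⁻¹ * max (X i ω - v) 0) =
      empCVaRObjective X N α ω v := by
  rw [empCVaRObjective, Finset.sum_add_distrib, Finset.sum_const, Finset.card_range, nsmul_eq_mul,
    ← Finset.mul_sum, mul_add, inv_mul_cancel_left₀ (Nat.cast_pos.2 hN).ne', mul_inv, ← mul_assoc,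
    mul_comm (N : ℝ)⁻¹]

end Objective

section Concentration

variable {Ω : Type*} {mΩ : MeasurableSpace Ω} {μ : Measure Ω} [IsProbabilityMeasure μ]

lemma measureReal_abs_sum_range_ge_le {Z : ℕ → Ω → ℝ} (hindep : iIndepFun Z μ) {c : ℝ≥0}
    {n : ℕ} (hZ : ∀ i < n, HasSubgaussianMGF (Z i) c μ) {ε : ℝ} (hε : 0 ≤ ε) :
    μ.real {ω | ε ≤ |∑ i ∈ Finset.range n, Z i ω|} ≤ 2 * Real.exp (-ε ^ 2 / (2 * n * c)) := by
  have hneg : iIndepFun (fun i => -Z i) μ := hindep.comp (fun _ x => -x) fun _ => measurable_neg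
  have hupper := HasSubgaussianMGF.measure_sum_range_ge_le_of_iIndepFun hindep hZ hε
  have hlower := HasSubgaussianMGF.measure_sum_range_ge_le_of_iIndepFun hneg
    (fun i hi => (hZ i hi).neg) hε
  calc μ.real {ω | ε ≤ |∑ i ∈ Finset.range n, Z i ω|}
      ≤ μ.real ({ω | ε ≤ ∑ i ∈ Finset.range n, Z i ω} ∪
          {ω | ε ≤ ∑ i ∈ Finset.range n, (-Z i) ω}) := by
        refine measureReal_mono fun ω (hω : ε ≤ |_|) => ?_
        rcases le_abs'.1 hω with h | h
        · right
          simp only [mem_ofPred_eq, Pi.neg_apply, Finset.sum_neg_distrib]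
          linarith
        · exact Or.inl h
    _ ≤ _ := (measureReal_union_le _ _).trans (by linarith)

variable {X : ℕ → Ω → ℝ}

lemma integral_indicator_le_eq_cdf (hmeas : ∀ i, Measurable (X i))
    (hident : ∀ i, μ.map (X i) = μ.map (X 0)) (i : ℕ) (t : ℝ) :
    μ[fun ω => if X i ω ≤ t then (1 : ℝ) else 0] = cdf (μ.map (X 0)) t := by
  have : IsProbabilityMeasure (μ.map (X 0)) :=
    Measure.isProbabilityMeasure_map (hmeas 0).aemeasurable
  have hind : (fun ω => if X i ω ≤ t then (1 : ℝ) else 0) = (X i ⁻¹' Iic t).indicator 1 := by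
    ext ω
    by_cases h : X i ω ≤ t <;> simp [h]
  rw [hind, integral_indicator_one (hmeas i measurableSet_Iic), cdf_eq_real, ← hident i,
    map_measureReal_apply (hmeas i) measurableSet_Iic]

lemma measureReal_le_abs_empCDF_sub_cdf_le (hmeas : ∀ i, Measurable (X i))
    (hindep : iIndepFun X μ) (hident : ∀ i, μ.map (X i) = μ.map (X 0)) (t : ℝ) {N : ℕ}
    (hN : 0 < N) {δ : ℝ} (hδ : 0 ≤ δ) :
    μ.real {ω | δ ≤ |empCDF X N ω t - cdf (μ.map (X 0)) t|} ≤
      2 * Real.exp (-2 * N * δ ^ 2) := by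
  set Z : ℕ → Ω → ℝ := fun i ω => (if X i ω ≤ t then (1 : ℝ) else 0) - cdf (μ.map (X 0)) t
  have hZ : ∀ i, HasSubgaussianMGF (Z i) ((‖(1 : ℝ) - 0‖₊ / 2) ^ 2) μ := by
    intro i
    have h := hasSubgaussianMGF_of_mem_Icc (μ := μ) (a := 0) (b := 1)
      (X := fun ω => if X i ω ≤ t then (1 : ℝ) else 0) ?_ ?_
    · rwa [integral_indicator_le_eq_cdf hmeas hident] at h
    · exact (Measurable.ite (hmeas i measurableSet_Iic) measurable_const
        measurable_const).aemeasurable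
    · exact ae_of_all _ fun ω => by split_ifs <;> simp
  have hindepZ : iIndepFun Z μ :=
    hindep.comp (fun _ x => (if x ≤ t then (1 : ℝ) else 0) - cdf (μ.map (X 0)) t)
      fun _ => (Measurable.ite measurableSet_Iic measurable_const measurable_const).sub_const _
  have hsum : ∀ ω,
      ∑ i ∈ Finset.range N, Z i ω = N * (empCDF X N ω t - cdf (μ.map (X 0)) t) := by
    intro ω
    rw [Finset.sum_sub_distrib, mul_sub, natCast_mul_empCDF]
    simp
  have hN' : (0 : ℝ) < N := Nat.cast_pos.2 hN
  calc μ.real {ω | δ ≤ |empCDF X N ω t - cdf (μ.map (X 0)) t|}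
      = μ.real {ω | N * δ ≤ |∑ i ∈ Finset.range N, Z i ω|} := by
        simp_rw [hsum, abs_mul, Nat.abs_cast, mul_le_mul_iff_right₀ hN']
    _ ≤ 2 * Real.exp (-(N * δ) ^ 2 / (2 * N * ((‖(1 : ℝ) - 0‖₊ / 2) ^ 2 : ℝ≥0))) :=
        measureReal_abs_sum_range_ge_le hindepZ (fun i _ => hZ i) (by positivity)
    _ = 2 * Real.exp (-2 * N * δ ^ 2) := by
        congr 2
        push_cast
        field_simp
        norm_num

lemma exp_neg_two_mul_sqrt_log_div_sq {N : ℕ} (hN : 0 < N) :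
    Real.exp (-2 * N * √(Real.log N / N) ^ 2) = ((N : ℝ) ^ 2)⁻¹ := by
  have hN' : (0 : ℝ) < N := Nat.cast_pos.2 hN
  rw [Real.sq_sqrt (div_nonneg (Real.log_natCast_nonneg N) hN'.le),
    show -2 * (N : ℝ) * (Real.log N / N) = -Real.log ((N : ℝ) ^ 2) by
      rw [Real.log_pow]; field_simp; push_cast; ring,
    Real.exp_neg, Real.exp_log (by positivity)]

lemma tendsto_sqrt_log_div_atTop : Tendsto (fun N : ℕ => √(Real.log N / N)) atTop (𝓝 0) := by
  simpa only [Function.comp_def, id, Real.sqrt_zero] using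
    (Real.isLittleO_log_id_atTop.tendsto_div_nhds_zero.comp tendsto_natCast_atTop_atTop).sqrt

lemma ae_eventually_abs_empCDF_sub_cdf_lt (hmeas : ∀ i, Measurable (X i))
    (hindep : iIndepFun X μ) (hident : ∀ i, μ.map (X i) = μ.map (X 0)) (t : ℕ → ℝ) :
    ∀ᵐ ω ∂μ, ∀ᶠ N in atTop,
      |empCDF X N ω (t N) - cdf (μ.map (X 0)) (t N)| < √(Real.log N / N) := by
  set E : ℕ → Set Ω := fun N =>
    {ω | √(Real.log N / N) ≤ |empCDF X N ω (t N) - cdf (μ.map (X 0)) (t N)|}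
  -- Borel–Cantelli along `N = n + 1`, since the Hoeffding bound `2 / N ^ 2` needs `0 < N`.
  have hE : ∀ n : ℕ, μ (E (n + 1)) ≤ ENNReal.ofReal (2 * (((n + 1 : ℕ) : ℝ) ^ 2)⁻¹) := by
    intro n
    rw [← ofReal_measureReal, ← exp_neg_two_mul_sqrt_log_div_sq n.succ_pos]
    exact ENNReal.ofReal_le_ofReal <| measureReal_le_abs_empCDF_sub_cdf_le hmeas hindep hident _
      n.succ_pos (Real.sqrt_nonneg _)
  have hsumm : Summable fun n : ℕ => 2 * (((n + 1 : ℕ) : ℝ) ^ 2)⁻¹ :=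
    (summable_nat_add_iff 1).2 ((Real.summable_nat_pow_inv.2 (by norm_num)).mul_left 2)
  have hfin : ∑' n, μ (E (n + 1)) ≠ ⊤ :=
    ne_top_of_le_ne_top ENNReal.ofReal_ne_top ((ENNReal.tsum_le_tsum hE).trans_eq
      (ENNReal.ofReal_tsum_of_nonneg (fun _ => by positivity) hsumm).symm)
  filter_upwards [ae_eventually_notMem hfin] with ω hω
  obtain ⟨n₀, hn₀⟩ := eventually_atTop.1 hω
  refine eventually_atTop.2 ⟨n₀ + 1, fun N hN => ?_⟩
  obtain ⟨n, rfl⟩ : ∃ n, N = n + 1 := ⟨N - 1, by omega⟩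
  exact not_le.1 (hn₀ n (by omega))

end Concentration

theorem empiricalCVaR_representation_general {Ω : Type*} {mΩ : MeasurableSpace Ω}
    (μ : Measure Ω) [IsProbabilityMeasure μ]
    (X : ℕ → Ω → ℝ) (hmeas : ∀ i, Measurable (X i))
    (hindep : iIndepFun X μ)
    (hident : ∀ i, μ.map (X i) = μ.map (X 0))
    (f : ℝ → ℝ)
    (hdens : μ.map (X 0) = volume.withDensity (fun t => ENNReal.ofReal (f t)))
    (α : ℝ) (hα : α ∈ Set.Ioo (0 : ℝ) 1)
    (vα : ℝ) (hvα : vα = sInf {t : ℝ | α ≤ ((μ.map (X 0)) (Set.Iic t)).toReal})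
    (hf : ∃ ε > 0, ContinuousOn f (Metric.ball vα ε) ∧ ∀ t ∈ Metric.ball vα ε, 0 < f t)
    (cα : ℝ) :
    ∃ C : ℝ, ∀ᵐ ω ∂μ, ∀ᶠ N : ℕ in atTop,
      |(sampleQuantile X N α ω +
          ((1 - α) * N)⁻¹ * ∑ i ∈ Finset.range N, max (X i ω - sampleQuantile X N α ω) 0 - cα)
        - ((N : ℝ)⁻¹ * ∑ i ∈ Finset.range N, (vα + (1 - α)⁻¹ * max (X i ω - vα) 0) - cα)| ≤
        C * Real.log N / N := by
  set ν := μ.map (X 0)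
  have : IsProbabilityMeasure ν := Measure.isProbabilityMeasure_map (hmeas 0).aemeasurable
  have : NullSingletonClass ν := hdens ▸ inferInstance
  have hFv : cdf ν vα = α := by
    simp_rw [← measureReal_def, ← cdf_eq_real] at hvα
    exact hvα ▸ cdf_sInf_setOf_le_cdf_eq hα
  obtain ⟨c, hc, ε, hε, hgrowth⟩ := exists_mul_le_cdf_sub_cdf hdens hf
  set δ : ℕ → ℝ := fun N => √(Real.log N / N)
  refine ⟨(c * (1 - α))⁻¹, ?_⟩
  filter_upwards [ae_eventually_abs_empCDF_sub_cdf_lt hmeas hindep hident fun _ => vα,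
    ae_eventually_abs_empCDF_sub_cdf_lt hmeas hindep hident fun N => vα + δ N / c,
    ae_eventually_abs_empCDF_sub_cdf_lt hmeas hindep hident fun N => vα - δ N / c]
    with ω hcenter hplus hminus
  filter_upwards [hcenter, hplus, hminus, eventually_gt_atTop 0,
    tendsto_sqrt_log_div_atTop.eventually (gt_mem_nhds (mul_pos hc hε))]
    with N hv hright hleft hN hsmall
  obtain ⟨hgr, hgl⟩ := hgrowth (δ N / c) (by positivity) ((div_lt_iff₀' hc).2 hsmall)
  rw [sub_sub_sub_cancel_right, inv_mul_sum_eq_empCVaRObjective X ω hN]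
  refine (abs_empCVaRObjective_sampleQuantile_sub_le_of_empCDF X ω hN hα (e := δ N / c)
    (hFv ▸ hv.le) ?_ ?_).trans_eq ?_
  · rw [mul_div_cancel₀ _ hc.ne'] at hgr
    linarith [(abs_lt.1 hright).1]
  · rw [mul_div_cancel₀ _ hc.ne'] at hgl
    linarith [(abs_lt.1 hleft).2]
  · have hsq : δ N * δ N = Real.log N / N := Real.mul_self_sqrt (by positivity)
    calc δ N / c * δ N / (1 - α) = (c * (1 - α))⁻¹ * (δ N * δ N) := by rw [mul_inv]; ring
      _ = _ := by rw [hsq, mul_div_assoc]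

/-- Asymptotic representation of the empirical CVaR estimator:
`ĉ_α^N − c_α = ((1/N) Σ [v_α + (1/(1−α))(X_i − v_α)⁺] − c_α) + O_{a.s.}(N⁻¹ log N)`. -/
theorem empiricalCVaR_representation {Ω : Type*} {mΩ : MeasurableSpace Ω}
    (μ : Measure Ω) [IsProbabilityMeasure μ]
    (X : ℕ → Ω → ℝ) (hmeas : ∀ i, Measurable (X i))
    (hindep : iIndepFun X μ)
    (hident : ∀ i, μ.map (X i) = μ.map (X 0))
    (hsq : Integrable (fun ω => (X 0 ω) ^ 2) μ)
    (f : ℝ → ℝ)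
    (hdens : μ.map (X 0) = volume.withDensity (fun t => ENNReal.ofReal (f t)))
    (α : ℝ) (hα : α ∈ Set.Ioo (0 : ℝ) 1)
    (vα : ℝ) (hvα : vα = sInf {t : ℝ | α ≤ ((μ.map (X 0)) (Set.Iic t)).toReal})
    (hf : ∃ ε > 0, ContinuousOn f (Metric.ball vα ε) ∧ ∀ t ∈ Metric.ball vα ε, 0 < f t)
    (cα : ℝ) (hcα : cα = vα + (1 - α)⁻¹ * ∫ ω, max (X 0 ω - vα) 0 ∂μ) :
    ∃ C : ℝ, ∀ᵐ ω ∂μ, ∀ᶠ N : ℕ in atTop,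
      |(sampleQuantile X N α ω +
          ((1 - α) * N)⁻¹ * ∑ i ∈ Finset.range N, max (X i ω - sampleQuantile X N α ω) 0 - cα)
        - ((N : ℝ)⁻¹ * ∑ i ∈ Finset.range N, (vα + (1 - α)⁻¹ * max (X i ω - vα) 0) - cα)| ≤
        C * Real.log N / N :=
  empiricalCVaR_representation_general (mΩ := mΩ) μ X hmeas hindep hident f hdens α hα vα hvα hf cα
end

section
/- Let H be a random variable and for each M let Ē_M be a random variable such that the joint density p_M(h,e) of (H, Ē_M) exists with partial derivatives ∂p_M/∂h of all pairs (h,e), dominated as |∂p_M(h,e)/∂h| ≤ g_{1,M}(e) with sup_M ∫ |e|^r g_{1,M}(e) de < ∞ for 0 ≤ r ≤ 4. Let f̃_M be the density of H + Ē_M/√M and f the density of H. If t_M → t, then f̃_M(t_M) → f(t) as M → ∞. -/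
/-!
Since `∂p_M/∂h` is dominated by `g_{1,M}(e)`, the mean value theorem gives
`|p_M(t_M - e/√M, e) - p_M(t, e)| ≤ g_{1,M}(e) (|t_M - t| + |e|/√M)`. Integrating in `e`,
`|f̃_M(t_M) - f(t)| ≤ C |t_M - t| + C/√M`, where `C` bounds the zeroth and first moments of
`g_{1,M}` uniformly in `M`, and the right-hand side tends to `0`.
-/

open MeasureTheory Filter Set Topology

lemma pow_le_one_add_pow {x : ℝ} (hx : 0 ≤ x) {r n : ℕ} (hrn : r ≤ n) : x ^ r ≤ 1 + x ^ n := by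
  rcases le_total x 1 with hx₁ | hx₁
  · linarith [pow_le_one₀ hx hx₁ (n := r), pow_nonneg hx n]
  · linarith [pow_le_pow_right₀ hx₁ hrn]

lemma MeasureTheory.Integrable.abs_pow_mul_of_one_add_abs_pow_mul {g : ℝ → ℝ} {r n : ℕ}
    (hrn : r ≤ n) (hg : Integrable (fun x => (1 + |x| ^ n) * g x)) :
    Integrable (fun x => |x| ^ r * g x) := by
  have hpos : ∀ x : ℝ, 0 < 1 + |x| ^ n := fun x => by positivity
  have hweight : Continuous fun x : ℝ => |x| ^ r / (1 + |x| ^ n) :=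
    (continuous_abs.pow r).div (continuous_const.add (continuous_abs.pow n)) fun x => (hpos x).ne'
  refine (hg.bdd_mul hweight.aestronglyMeasurable (c := 1) (ae_of_all _ fun x => ?_)).congr
    (ae_of_all _ fun x => ?_)
  · rw [Real.norm_eq_abs, abs_of_nonneg (by positivity), div_le_one (hpos x)]
    exact pow_le_one_add_pow (abs_nonneg x) hrn
  · field_simp [(hpos x).ne']

lemma abs_integral_sub_integral_le {α : Type*} [MeasurableSpace α] {μ : Measure α} {F G h : α → ℝ}
    (hF : AEStronglyMeasurable F μ) (hG : AEStronglyMeasurable G μ) (hh : Integrable h μ) (hFG : ∀ x, |F x - G x| ≤ h x) :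
    |∫ x, F x ∂μ - ∫ x, G x ∂μ| ≤ ∫ x, h x ∂μ := by
  have hdiff : Integrable (fun x => F x - G x) μ :=
    hh.mono' (hF.sub hG) (ae_of_all _ fun x => hFG x)
  by_cases hGi : Integrable G μ
  · have hFi : Integrable F μ := (hdiff.add hGi).congr (ae_of_all _ fun x => by simp)
    rw [← integral_sub hFi hGi]
    exact norm_integral_le_of_norm_le hh
      (ae_of_all _ fun x => (Real.norm_eq_abs _).trans_le (hFG x))
  · have hFi : ¬ Integrable F μ := fun hFi =>
      hGi ((hFi.sub hdiff).congr (ae_of_all _ fun x => by simp))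
    rw [integral_undef hFi, integral_undef hGi, sub_zero, abs_zero]
    exact integral_nonneg fun x => (abs_nonneg _).trans (hFG x)

lemma abs_integral_shift_sub_integral_le {q : ℝ → ℝ → ℝ} {g : ℝ → ℝ}
    (hq : Measurable (Function.uncurry q)) (hlip : ∀ e a b, |q a e - q b e| ≤ g e * |a - b|)
    (hg : Integrable g) (hg₁ : Integrable fun e => |e| * g e) (s t σ : ℝ) :
    |(∫ e, q (s - e / σ) e) - ∫ e, q t e| ≤ |s - t| * (∫ e, g e) + (∫ e, |e| * g e) / |σ| := by
  have hg_nonneg : ∀ e, 0 ≤ g e := fun e => by simpa using (abs_nonneg _).trans (hlip e 1 0)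
  have hpoint : ∀ e, |q (s - e / σ) e - q t e| ≤ |s - t| * g e + |σ|⁻¹ * (|e| * g e) := by
    intro e
    calc |q (s - e / σ) e - q t e| ≤ g e * |(s - t) - e / σ| := by
          rw [sub_right_comm]; exact hlip e _ _
      _ ≤ g e * (|s - t| + |e| / |σ|) := by
          gcongr
          · exact hg_nonneg e
          · exact (abs_sub _ _).trans_eq (by rw [abs_div])
      _ = |s - t| * g e + |σ|⁻¹ * (|e| * g e) := by ring
  refine (abs_integral_sub_integral_le
    (hq.comp ((measurable_const.sub (measurable_id.div_const σ)).prodMk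
      measurable_id)).aestronglyMeasurable
    (hq.comp (measurable_const.prodMk measurable_id)).aestronglyMeasurable
    (h := fun e => |s - t| * g e + |σ|⁻¹ * (|e| * g e))
    ((hg.const_mul _).add (hg₁.const_mul _)) hpoint).trans_eq ?_
  rw [integral_add (hg.const_mul _) (hg₁.const_mul _), integral_const_mul, integral_const_mul,
    inv_mul_eq_div]

theorem noisy_density_tendsto_general (p dp : ℕ → ℝ → ℝ → ℝ) (g1 : ℕ → ℝ → ℝ) (f : ℝ → ℝ)
    (hmeas : ∀ M, Measurable (Function.uncurry (p M)))
    (hderiv : ∀ M e s, HasDerivAt (fun u => p M u e) (dp M s e) s)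
    (hdom : ∀ M s e, |dp M s e| ≤ g1 M e)
    (hg1_int : ∀ M, Integrable (fun e => (1 + |e| ^ 4) * g1 M e) volume)
    (hg1_sup : ∃ C : ℝ, ∀ M : ℕ, ∀ r : ℕ, r ≤ 4 → ∫ e, |e| ^ r * g1 M e ≤ C)
    (hmarg : ∀ M t, ∫ e, p M t e = f t)
    (t : ℝ) (tM : ℕ → ℝ) (ht : Tendsto tM atTop (nhds t)) :
    Tendsto (fun M : ℕ => ∫ e, p M (tM M - e / Real.sqrt M) e) atTop (nhds (f t)) := by
  obtain ⟨C, hC⟩ := hg1_sup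
  have hlip : ∀ M e a b, |p M a e - p M b e| ≤ g1 M e * |a - b| := fun M e a b => by
    simpa only [Real.norm_eq_abs] using Convex.norm_image_sub_le_of_norm_hasDerivWithin_le
      (fun x _ => (hderiv M e x).hasDerivWithinAt) (fun x _ => hdom M x e) convex_univ
      (mem_univ b) (mem_univ a)
  have hmoment : ∀ M r, r ≤ 4 → Integrable (fun e => |e| ^ r * g1 M e) :=
    fun M r hr => (hg1_int M).abs_pow_mul_of_one_add_abs_pow_mul hr
  have hbound : ∀ M : ℕ, |(∫ e, p M (tM M - e / √M) e) - f t| ≤ |tM M - t| * C + C / √M := by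
    intro M
    rw [← hmarg M t]
    refine (abs_integral_shift_sub_integral_le (hmeas M) (hlip M) (by simpa using hmoment M 0)
      (by simpa using hmoment M 1) _ _ _).trans ?_
    rw [abs_of_nonneg (Real.sqrt_nonneg _)]
    exact add_le_add (mul_le_mul_of_nonneg_left (by simpa using hC M 0) (abs_nonneg _))
      (div_le_div_of_nonneg_right (by simpa using hC M 1) (Real.sqrt_nonneg _))
  have hrate : Tendsto (fun M : ℕ => |tM M - t| * C + C / √M) atTop (𝓝 0) := by
    have hdist : Tendsto (fun M => |tM M - t|) atTop (𝓝 0) := by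
      simpa using (tendsto_sub_nhds_zero_iff.mpr ht).abs
    simpa using (hdist.mul_const C).add (tendsto_const_nhds.div_atTop
      (Real.tendsto_sqrt_atTop.comp tendsto_natCast_atTop_atTop))
  exact tendsto_sub_nhds_zero_iff.mp
    (squeeze_zero_norm (fun M => (Real.norm_eq_abs _).trans_le (hbound M)) hrate)

/-- Convergence of the noisy-response density to the true density (Lemma 1 of Gordy–Juneja):
if `t_M → t`, then `f̃_M(t_M) = ∫ p_M(t_M − e/√M, e) de → f(t) = ∫ p_M(t, e) de`. -/
theorem noisy_density_tendsto (p dp : ℕ → ℝ → ℝ → ℝ) (g1 : ℕ → ℝ → ℝ) (f : ℝ → ℝ)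
    (hmeas : ∀ M, Measurable (Function.uncurry (p M)))
    (hp_nonneg : ∀ M s e, 0 ≤ p M s e)
    (hderiv : ∀ M e s, HasDerivAt (fun u => p M u e) (dp M s e) s)
    (hdom : ∀ M s e, |dp M s e| ≤ g1 M e)
    (hg1_nonneg : ∀ M e, 0 ≤ g1 M e)
    (hg1_int : ∀ M, Integrable (fun e => (1 + |e| ^ 4) * g1 M e) volume)
    (hg1_sup : ∃ C : ℝ, ∀ M : ℕ, ∀ r : ℕ, r ≤ 4 → ∫ e, |e| ^ r * g1 M e ≤ C)
    (hmarg : ∀ M t, ∫ e, p M t e = f t)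
    (t : ℝ) (tM : ℕ → ℝ) (ht : Tendsto tM atTop (nhds t)) :
    Tendsto (fun M : ℕ => ∫ e, p M (tM M - e / Real.sqrt M) e) atTop (nhds (f t)) :=
  noisy_density_tendsto_general p dp g1 f hmeas hderiv hdom hg1_int hg1_sup hmarg t tM ht
end

section
/- Fix N and distinct values H(θ₁),...,H(θ_N), where each Ĥ_M(θ_i) → H(θ_i) almost surely as M → ∞ and, conditionally on θ_i, √M(Ĥ_M(θ_i) − H(θ_i)) converges in distribution to N(0, τ_i²). Then √M(Ĥ_M(θ^{(⌈αN⌉)}) − H(θ_{(⌈αN⌉)})) converges in distribution to N(0, τ_{(⌈αN⌉)}²), where θ^{(k)} is the scenario achieving the k-th smallest noisy value and θ_{(k)} the scenario achieving the k-th smallest true value. -/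
open MeasureTheory ProbabilityTheory Filter Set Topology

/-!
Sorting is locally constant at a tuple with distinct entries, and almost sure convergence
implies convergence in probability, so with probability tending to one the noisy ranking
coincides with the true one; on that event the `k`-th noisy order statistic is the noisy value
of the fixed scenario `θ_(k)`. Hence the two c.d.f.s differ by at most the probability of a
ranking error, which tends to zero, and the CLT for the single scenario `θ_(k)` finishes.
-/

theorem Tuple.eventually_sort_eq {α : Type*} [LinearOrder α] [TopologicalSpace α]
    [OrderClosedTopology α] {n : ℕ} {a : Fin n → α} (ha : Function.Injective a) :
    ∀ᶠ f in 𝓝 a, Tuple.sort f = Tuple.sort a := by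
  set σ := Tuple.sort a
  have ha_sorted : StrictMono (a ∘ σ) :=
    (Tuple.monotone_sort a).strictMono_of_injective (ha.comp σ.injective)
  have hstable : ∀ᶠ f in 𝓝 a, StrictMono (f ∘ σ) :=
    eventually_all.2 fun i => eventually_all.2 fun j => eventually_imp_distrib_left.2 fun hij =>
      ((continuous_apply (σ i)).tendsto a).eventually_lt ((continuous_apply (σ j)).tendsto a)
        (ha_sorted hij)
  filter_upwards [hstable] with f hf
  exact (Tuple.eq_sort_iff.2 ⟨hf.monotone, fun i j hij hfij => absurd hfij (hf hij).ne⟩).symm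

theorem MeasureTheory.TendstoInMeasure.tendsto_measureReal_notMem_of_mem_nhds
    {Ω ι E : Type*} {mΩ : MeasurableSpace Ω} {μ : Measure Ω} [IsFiniteMeasure μ]
    [PseudoMetricSpace E] {l : Filter ι} {X : ι → Ω → E} {c : E}
    (hX : TendstoInMeasure μ X l fun _ => c) {U : Set E} (hU : U ∈ 𝓝 c) :
    Tendsto (fun i => μ.real {ω | X i ω ∉ U}) l (𝓝 0) := by
  obtain ⟨ε, hε, hball⟩ := Metric.mem_nhds_iff.1 hU
  refine squeeze_zero (fun _ => measureReal_nonneg) (fun i => measureReal_mono fun ω hω => ?_)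
    (tendstoInMeasure_iff_measureReal_dist.1 hX ε hε)
  exact not_lt.1 fun h => hω (hball (Metric.mem_ball.2 h))

theorem MeasureTheory.tendsto_measureReal_of_mem_iff_of_notMem
    {Ω ι : Type*} {mΩ : MeasurableSpace Ω} {μ : Measure Ω} [IsFiniteMeasure μ]
    {l : Filter ι} {A B C : ι → Set Ω} {x : ℝ}
    (hAB : ∀ i, ∀ ω ∉ C i, ω ∈ A i ↔ ω ∈ B i)
    (hB : Tendsto (fun i => μ.real (B i)) l (𝓝 x))
    (hC : Tendsto (fun i => μ.real (C i)) l (𝓝 0)) :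
    Tendsto (fun i => μ.real (A i)) l (𝓝 x) := by
  have hle : ∀ {S T : ι → Set Ω}, (∀ i, ∀ ω ∉ C i, ω ∈ S i → ω ∈ T i) →
      ∀ i, μ.real (S i) ≤ μ.real (T i) + μ.real (C i) := fun hST i =>
    (measureReal_mono fun ω hω => (em (ω ∈ C i)).elim Or.inr fun h => Or.inl (hST i ω h hω)).trans
      (measureReal_union_le _ _)
  have hdist : ∀ i, dist (μ.real (B i)) (μ.real (A i)) ≤ μ.real (C i) := fun i => by
    rw [Real.dist_eq, abs_sub_le_iff]
    constructor
    · linarith [hle (fun i ω hω => (hAB i ω hω).2) i]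
    · linarith [hle (fun i ω hω => (hAB i ω hω).1) i]
  exact hB.congr_dist (squeeze_zero (fun _ => dist_nonneg) hdist hC)

/-- CLT for the noisy order statistic: if each `√M (Y M i − a i) ⇒ N(0, τ i)` and the true
values `a i` are distinct, then `√M (Ĥ_M(θ^{(k)}) − H(θ_{(k)})) ⇒ N(0, τ_{(k)})`, where
`θ^{(k)}` is the index of the `k`-th smallest noisy value and `θ_{(k)}` that of the `k`-th
smallest true value.  Convergence in distribution is stated via c.d.f.s. -/
theorem noisy_order_statistic_clt {Ω : Type*} {mΩ : MeasurableSpace Ω}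
    (μ : Measure Ω) [IsProbabilityMeasure μ]
    {N : ℕ} (a : Fin N → ℝ) (hdist : Function.Injective a)
    (Y : ℕ → Fin N → Ω → ℝ) (hmeas : ∀ M i, Measurable (Y M i))
    (hconv : ∀ᵐ ω ∂μ, ∀ i, Tendsto (fun M => Y M i ω) atTop (nhds (a i)))
    (τ : Fin N → NNReal)
    (hclt : ∀ (i : Fin N) (t : ℝ),
      Tendsto (fun M : ℕ => (μ {ω | Real.sqrt M * (Y M i ω - a i) ≤ t}).toReal)
        atTop (nhds ((gaussianReal 0 (τ i) (Set.Iic t)).toReal)))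
    (k : Fin N) :
    ∀ t : ℝ, Tendsto (fun M : ℕ =>
        (μ {ω | Real.sqrt M *
          ((fun l => Y M l ω) (Tuple.sort (fun l => Y M l ω) k) - a (Tuple.sort a k)) ≤ t}).toReal)
      atTop (nhds ((gaussianReal 0 (τ (Tuple.sort a k)) (Set.Iic t)).toReal)) := by
  intro t
  have hprob : TendstoInMeasure μ (fun M ω l => Y M l ω) atTop fun _ => a :=
    tendstoInMeasure_of_tendsto_ae (fun M => (measurable_pi_lambda _ (hmeas M)).aestronglyMeasurable)
      (by filter_upwards [hconv] with ω hω using tendsto_pi_nhds.2 hω)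
  refine tendsto_measureReal_of_mem_iff_of_notMem (fun M ω hω => ?_) (hclt (Tuple.sort a k) t)
    (hprob.tendsto_measureReal_notMem_of_mem_nhds (Tuple.eventually_sort_eq hdist))
  simp only [mem_ofPred_eq, not_not] at hω
  simp only [mem_ofPred_eq, hω]
end

section
/- Suppose a_N and b_{N,M} are arrays of random variables with √N a_N ⇒ N(0,σ²) as N → ∞ (uniformly over M in the sense that the asymptotic representation holds with remainder O(N^{−3/4}(log N)^{3/4}) uniformly in M) and b_{N,M} = β/M + o(1/M) deterministically. Then √N(a_N + b_{N,M}) ⇒ N(0,σ²) as N, M → ∞ jointly if and only if N = o(M²). -/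
open MeasureTheory ProbabilityTheory Filter Set Topology

/-! With `s_k = √N_k · b_{M_k}`, the event `√N (a_N + b_M) ≤ t` is `√N a_N ≤ t - s_k`. The
c.d.f.s of `√N a_N` are monotone and converge pointwise to the Gaussian c.d.f. `Φ`, which is
continuous and strictly increasing; so their values at `t - s_k` tend to `Φ t` for every `t`
exactly when `s_k → 0`, since a shift staying away from `0` moves the limit off `Φ t`.
Finally `s_k = √(N_k / M_k²) · M_k b_{M_k}` with `M b_M → β ≠ 0`, hence `s_k → 0` if and
only if `N_k / M_k² → 0`. -/

lemma ProbabilityTheory.continuousAt_cdf {ν : Measure ℝ} [IsProbabilityMeasure ν] {x : ℝ}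
    (hx : ν {x} = 0) : ContinuousAt (cdf ν) x := by
  have hleft : cdf ν x ≤ Function.leftLim (cdf ν) x := by
    rw [← measure_cdf ν, StieltjesFunction.measure_singleton, ENNReal.ofReal_eq_zero] at hx
    linarith
  rw [(cdf ν).mono.continuousAt_iff_leftLim_eq_rightLim, StieltjesFunction.rightLim_eq]
  exact le_antisymm ((cdf ν).mono.leftLim_le le_rfl) hleft

lemma ProbabilityTheory.cdf_lt_cdf {ν : Measure ℝ} [IsProbabilityMeasure ν] {x y : ℝ}
    (h : ν (Ioc x y) ≠ 0) : cdf ν x < cdf ν y := by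
  rw [← measure_cdf ν, StieltjesFunction.measure_Ioc, ne_eq, ENNReal.ofReal_eq_zero] at h
  linarith

lemma ProbabilityTheory.continuous_cdf_gaussianReal (m : ℝ) {v : NNReal} (hv : v ≠ 0) :
    Continuous (cdf (gaussianReal m v)) :=
  continuous_iff_continuousAt.2 fun _ => continuousAt_cdf
    (gaussianReal_absolutelyContinuous m hv (Real.volume_singleton))

lemma ProbabilityTheory.strictMono_cdf_gaussianReal (m : ℝ) {v : NNReal} (hv : v ≠ 0) :
    StrictMono (cdf (gaussianReal m v)) := fun x y hxy => cdf_lt_cdf fun h => by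
  have hvol := gaussianReal_absolutelyContinuous' m hv h
  rw [Real.volume_Ioc, ENNReal.ofReal_eq_zero] at hvol
  linarith

section ShiftedArguments

variable {ι : Type*} {l : Filter ι} {F : ι → ℝ → ℝ} {Φ : ℝ → ℝ} {s : ι → ℝ} {t : ℝ}

lemma tendsto_apply_sub_of_tendsto_zero (hF : ∀ i, Monotone (F i))
    (hconv : ∀ c, Tendsto (fun i => F i c) l (𝓝 (Φ c))) (hΦ : ContinuousAt Φ t)
    (hs : Tendsto s l (𝓝 0)) : Tendsto (fun i => F i (t - s i)) l (𝓝 (Φ t)) := by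
  rw [tendsto_order]
  constructor
  · intro a ha
    obtain ⟨δ, hδ, hΦδ⟩ := Metric.eventually_nhds_iff.1 (hΦ.eventually (lt_mem_nhds ha))
    have hlow : a < Φ (t - δ / 2) :=
      hΦδ (by rw [Real.dist_eq, abs_lt]; constructor <;> linarith)
    filter_upwards [(hconv _).eventually (lt_mem_nhds hlow),
      hs.eventually (gt_mem_nhds (half_pos hδ))] with i hFi hsi
    exact hFi.trans_le (hF i (by linarith))
  · intro a ha
    obtain ⟨δ, hδ, hΦδ⟩ := Metric.eventually_nhds_iff.1 (hΦ.eventually (gt_mem_nhds ha))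
    have hup : Φ (t + δ / 2) < a :=
      hΦδ (by rw [Real.dist_eq, abs_lt]; constructor <;> linarith)
    filter_upwards [(hconv _).eventually (gt_mem_nhds hup),
      hs.eventually (lt_mem_nhds (neg_lt_zero.2 (half_pos hδ)))] with i hFi hsi
    exact (hF i (by linarith)).trans_lt hFi

lemma tendsto_zero_of_tendsto_apply_sub (hF : ∀ i, Monotone (F i))
    (hconv : ∀ c, Tendsto (fun i => F i c) l (𝓝 (Φ c))) (hΦ : StrictMono Φ)
    (h : Tendsto (fun i => F i (t - s i)) l (𝓝 (Φ t))) : Tendsto s l (𝓝 0) := by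
  rw [tendsto_order]
  constructor
  · intro a ha
    obtain ⟨m, hm, hm'⟩ := exists_between (hΦ (show t < t - a by linarith))
    filter_upwards [h.eventually (gt_mem_nhds hm), (hconv _).eventually (lt_mem_nhds hm')]
      with i h1 h2
    by_contra! hle
    linarith [hF i (show t - a ≤ t - s i by linarith)]
  · intro a ha
    obtain ⟨m, hm, hm'⟩ := exists_between (hΦ (show t - a < t by linarith))
    filter_upwards [h.eventually (lt_mem_nhds hm'), (hconv _).eventually (gt_mem_nhds hm)]
      with i h1 h2
    by_contra! hle
    linarith [hF i (show t - s i ≤ t - a by linarith)]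

lemma tendsto_apply_sub_iff (hF : ∀ i, Monotone (F i))
    (hconv : ∀ c, Tendsto (fun i => F i c) l (𝓝 (Φ c))) (hΦc : Continuous Φ)
    (hΦ : StrictMono Φ) :
    (∀ t, Tendsto (fun i => F i (t - s i)) l (𝓝 (Φ t))) ↔ Tendsto s l (𝓝 0) :=
  ⟨fun h => tendsto_zero_of_tendsto_apply_sub hF hconv hΦ (h 0),
    fun hs _ => tendsto_apply_sub_of_tendsto_zero hF hconv hΦc.continuousAt hs⟩

end ShiftedArguments

lemma tendsto_mul_zero_iff_of_tendsto {ι : Type*} {l : Filter ι} {x u : ι → ℝ} {β : ℝ}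
    (hu : Tendsto u l (𝓝 β)) (hβ : β ≠ 0) :
    Tendsto (fun i => x i * u i) l (𝓝 0) ↔ Tendsto x l (𝓝 0) := by
  refine ⟨fun h => ?_, fun h => by simpa using h.mul hu⟩
  have hquot := h.div hu hβ
  rw [zero_div] at hquot
  refine hquot.congr' ?_
  filter_upwards [hu.eventually_ne hβ] with i hi
  exact mul_div_cancel_right₀ _ hi

lemma tendsto_sqrt_zero_iff {ι : Type*} {l : Filter ι} {x : ι → ℝ} (hx : ∀ i, 0 ≤ x i) :
    Tendsto (fun i => √(x i)) l (𝓝 0) ↔ Tendsto x l (𝓝 0) := by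
  refine ⟨fun h => ?_, fun h => by simpa using h.sqrt⟩
  simpa [Real.sq_sqrt (hx _)] using h.pow 2

lemma tendsto_natCast_mul_of_eq_div_add {b r : ℕ → ℝ} {β : ℝ}
    (hb : ∀ M : ℕ, 0 < M → b M = β / M + r M)
    (hr : Tendsto (fun M : ℕ => (M : ℝ) * r M) atTop (𝓝 0)) :
    Tendsto (fun M : ℕ => (M : ℝ) * b M) atTop (𝓝 β) := by
  have hsum : Tendsto (fun M : ℕ => β + M * r M) atTop (𝓝 β) := by
    simpa using hr.const_add β
  refine hsum.congr' ?_
  filter_upwards [eventually_gt_atTop 0] with M hM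
  rw [hb M hM, mul_add, mul_div_cancel₀ _ (by positivity)]

theorem normality_iff_N_littleO_Msq_general {Ω : Type*} {mΩ : MeasurableSpace Ω}
    (μ : Measure Ω) [IsProbabilityMeasure μ]
    (a : ℕ → Ω → ℝ)
    (σ : NNReal) (hσ : σ ≠ 0)
    (hclt : ∀ t : ℝ, Tendsto (fun N : ℕ => (μ {ω | Real.sqrt N * a N ω ≤ t}).toReal)
      atTop (nhds ((gaussianReal 0 σ (Set.Iic t)).toReal)))
    (b : ℕ → ℝ) (β : ℝ) (hβ : β ≠ 0) (r : ℕ → ℝ)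
    (hb : ∀ M : ℕ, 0 < M → b M = β / M + r M)
    (hr : Tendsto (fun M : ℕ => (M : ℝ) * r M) atTop (nhds 0))
    (Nseq Mseq : ℕ → ℕ)
    (hN : Tendsto Nseq atTop atTop) (hM : Tendsto Mseq atTop atTop) :
    Tendsto (fun k => (Nseq k : ℝ) / (Mseq k : ℝ) ^ 2) atTop (nhds 0) ↔
      ∀ t : ℝ, Tendsto (fun k =>
          (μ {ω | Real.sqrt (Nseq k) * (a (Nseq k) ω + b (Mseq k)) ≤ t}).toReal)
        atTop (nhds ((gaussianReal 0 σ (Set.Iic t)).toReal)) := by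
  have hΦ (t : ℝ) : (gaussianReal 0 σ (Iic t)).toReal = cdf (gaussianReal 0 σ) t :=
    (cdf_eq_real _ t).symm
  set F : ℕ → ℝ → ℝ := fun k c => (μ {ω | √(Nseq k) * a (Nseq k) ω ≤ c}).toReal
  have hF (k : ℕ) : Monotone (F k) := fun _ _ hcc' =>
    ENNReal.toReal_mono (measure_ne_top _ _) (measure_mono fun _ hω => le_trans hω hcc')
  have hconv (c : ℝ) : Tendsto (fun k => F k c) atTop (𝓝 (cdf (gaussianReal 0 σ) c)) := by
    rw [← hΦ]
    exact (hclt c).comp hN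
  have hshift (k : ℕ) (t : ℝ) :
      {ω | √(Nseq k) * (a (Nseq k) ω + b (Mseq k)) ≤ t} =
        {ω | √(Nseq k) * a (Nseq k) ω ≤ t - √(Nseq k) * b (Mseq k)} := by
    ext ω
    simp only [mem_ofPred_eq, mul_add, le_sub_iff_add_le]
  have hbias : Tendsto (fun k => (Mseq k : ℝ) * b (Mseq k)) atTop (𝓝 β) :=
    (tendsto_natCast_mul_of_eq_div_add hb hr).comp hM
  have hscale : ∀ᶠ k in atTop,
      √((Nseq k : ℝ) / (Mseq k : ℝ) ^ 2) * (Mseq k * b (Mseq k)) = √(Nseq k) * b (Mseq k) := by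
    filter_upwards [hM.eventually_gt_atTop 0] with k hk
    rw [Real.sqrt_div' _ (sq_nonneg _), Real.sqrt_sq (Nat.cast_nonneg _)]
    field_simp
  simp_rw [hΦ, hshift]
  rw [tendsto_apply_sub_iff hF hconv (continuous_cdf_gaussianReal 0 hσ)
    (strictMono_cdf_gaussianReal 0 hσ), ← tendsto_sqrt_zero_iff (fun _ => by positivity),
    ← tendsto_mul_zero_iff_of_tendsto hbias hβ]
  exact tendsto_congr' hscale

/-- Abstract necessity and sufficiency of `N = o(M²)`: if `√N a_N ⇒ N(0,σ²)` and the
deterministic bias satisfies `b_M = β/M + o(1/M)` with `β ≠ 0`, then along any sequences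
`N_k, M_k → ∞`, the combined error `√N (a_N + b_M)` converges in distribution to `N(0,σ²)`
if and only if `N_k/M_k² → 0`.  Convergence in distribution is stated via c.d.f.s. -/
theorem normality_iff_N_littleO_Msq {Ω : Type*} {mΩ : MeasurableSpace Ω}
    (μ : Measure Ω) [IsProbabilityMeasure μ]
    (a : ℕ → Ω → ℝ) (hameas : ∀ N, Measurable (a N))
    (σ : NNReal) (hσ : σ ≠ 0)
    (hclt : ∀ t : ℝ, Tendsto (fun N : ℕ => (μ {ω | Real.sqrt N * a N ω ≤ t}).toReal)
      atTop (nhds ((gaussianReal 0 σ (Set.Iic t)).toReal)))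
    (b : ℕ → ℝ) (β : ℝ) (hβ : β ≠ 0) (r : ℕ → ℝ)
    (hb : ∀ M : ℕ, 0 < M → b M = β / M + r M)
    (hr : Tendsto (fun M : ℕ => (M : ℝ) * r M) atTop (nhds 0))
    (Nseq Mseq : ℕ → ℕ)
    (hN : Tendsto Nseq atTop atTop) (hM : Tendsto Mseq atTop atTop) :
    Tendsto (fun k => (Nseq k : ℝ) / (Mseq k : ℝ) ^ 2) atTop (nhds 0) ↔
      ∀ t : ℝ, Tendsto (fun k =>
          (μ {ω | Real.sqrt (Nseq k) * (a (Nseq k) ω + b (Mseq k)) ≤ t}).toReal)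
        atTop (nhds ((gaussianReal 0 σ (Set.Iic t)).toReal)) :=
  normality_iff_N_littleO_Msq_general (mΩ := mΩ) μ a σ hσ hclt b β hβ r hb hr Nseq Mseq hN hM
end
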